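/- Let U ⊆ ℂ be a nonempty open connected set, let f_n : U → ℂ be a sequence of holomorphic functions converging locally uniformly on U to a function f, and assume f is nonconstant. Then for every compact set K contained in the image f(U) there exists N such that for all n ≥ N, K is contained in the image f_n(U). -/

import Mathlib

/-!
Near a point `z₀` of `U` the nonconstant limit `F` has an isolated fibre, so on a small circle
around `z₀` the values of `F` stay at distance `≥ ε` from `F z₀`. Once `f n` is `ε/6`-close to
`F` on the closed disc, the same holds for `f n` with `2ε/3`, and the quantitative open mapping
theorem (a maximum-principle argument) puts a ball of fixed radius around `F z₀` inside the image
of the disc under `f n`. A finite subcover of `K` by such balls gives a common `N`.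
-/

open Metric Filter Set
open scoped Topology

theorem IsCompact.eventually_subset_of_forall_exists_mem_nhds {X ι : Type*} [TopologicalSpace X]
    {l : Filter ι} {K : Set X} (hK : IsCompact K) {S : ι → Set X}
    (h : ∀ x ∈ K, ∃ V ∈ 𝓝 x, ∀ᶠ i in l, V ⊆ S i) : ∀ᶠ i in l, K ⊆ S i :=
  hK.induction_on (p := fun s => ∀ᶠ i in l, s ⊆ S i) (.of_forall fun _ => empty_subset _)
    (fun _ _ hst ht => ht.mono fun _ => hst.trans)
    (fun _ _ hs ht => (hs.and ht).mono fun _ h => union_subset h.1 h.2)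
    (fun x hx => (h x hx).imp fun _ hV => ⟨mem_nhdsWithin_of_mem_nhds hV.1, hV.2⟩)

theorem AnalyticOnNhd.eventually_ne_of_not_isConst {f : ℂ → ℂ} {U : Set ℂ}
    (hf : AnalyticOnNhd ℂ f U) (hU : IsPreconnected U) (hnc : ¬ ∃ c, ∀ z ∈ U, f z = c)
    {z₀ : ℂ} (hz₀ : z₀ ∈ U) : ∀ᶠ z in 𝓝[≠] z₀, f z ≠ f z₀ := by
  refine not_frequently.mp fun hfreq => hnc ⟨f z₀, fun z hz => ?_⟩
  exact hf.eqOn_of_preconnected_of_frequently_eq analyticOnNhd_const hU hz₀ hfreq hz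

section Disc

variable {g F : ℂ → ℂ} {z₀ : ℂ} {r ε : ℝ}

theorem DiffContOnCl.ball_subset_image_closedBall_of_pos (hg : DiffContOnCl ℂ g (ball z₀ r))
    (hr : 0 < r) (hε : 0 < ε) (hsphere : ∀ z ∈ sphere z₀ r, ε ≤ ‖g z - g z₀‖) :
    ball (g z₀) (ε / 2) ⊆ g '' closedBall z₀ r := by
  refine hg.ball_subset_image_closedBall hr hsphere fun hconst => ?_
  have hball : EqOn g (fun _ => g z₀) (ball z₀ r) :=
    (hg.differentiableOn.analyticOnNhd isOpen_ball).eqOn_of_preconnected_of_eventuallyEq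
      analyticOnNhd_const (convex_ball z₀ r).isPreconnected (mem_ball_self hr)
      (hconst.mono fun _ => not_not.mp)
  have hclosed : EqOn g (fun _ => g z₀) (closedBall z₀ r) := by
    rw [← closure_ball z₀ hr.ne']
    exact hball.of_subset_closure hg.continuousOn continuousOn_const subset_closure subset_rfl
  obtain ⟨z, hz⟩ := (NormedSpace.sphere_nonempty (x := z₀)).mpr hr.le
  have := hsphere z hz
  rw [hclosed (sphere_subset_closedBall hz), sub_self, norm_zero] at this
  linarith

theorem DiffContOnCl.ball_subset_image_closedBall_of_dist_lt (hg : DiffContOnCl ℂ g (ball z₀ r))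
    (hr : 0 < r) (hε : 0 < ε) (hF : ∀ z ∈ sphere z₀ r, ε ≤ ‖F z - F z₀‖)
    (hgF : ∀ z ∈ closedBall z₀ r, dist (F z) (g z) < ε / 6) :
    ball (F z₀) (ε / 6) ⊆ g '' closedBall z₀ r := by
  have hz₀ : dist (F z₀) (g z₀) < ε / 6 := hgF z₀ (mem_closedBall_self hr.le)
  have hsphere : ∀ z ∈ sphere z₀ r, 2 * ε / 3 ≤ ‖g z - g z₀‖ := by
    intro z hz
    have hz' : dist (F z) (g z) < ε / 6 := hgF z (sphere_subset_closedBall hz)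
    have := dist_triangle4 (F z) (g z) (g z₀) (F z₀)
    rw [dist_comm (g z₀), dist_eq_norm (g z), dist_eq_norm (F z)] at this
    linarith [hF z hz]
  intro w hw
  refine hg.ball_subset_image_closedBall_of_pos hr (by positivity) hsphere (mem_ball.mpr ?_)
  linarith [dist_triangle w (F z₀) (g z₀), mem_ball.mp hw]

end Disc

theorem TendstoLocallyUniformlyOn.exists_ball_eventually_subset_image {ι : Type*} {l : Filter ι}
    {U : Set ℂ} {f : ι → ℂ → ℂ} {F : ℂ → ℂ} (hconv : TendstoLocallyUniformlyOn f F l U)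
    (hU : IsOpen U) (hol : ∀ᶠ i in l, DifferentiableOn ℂ (f i) U) (hF : ContinuousOn F U)
    {z₀ : ℂ} (hz₀ : z₀ ∈ U) (hne : ∀ᶠ z in 𝓝[≠] z₀, F z ≠ F z₀) :
    ∃ δ > 0, ∀ᶠ i in l, ball (F z₀) δ ⊆ f i '' U := by
  obtain ⟨r, hr, hrsub⟩ : ∃ r > 0, closedBall z₀ r ⊆ U ∩ {z | z ≠ z₀ → F z ≠ F z₀} :=
    nhds_basis_closedBall.mem_iff.mp
      (inter_mem (hU.mem_nhds hz₀) (eventually_nhdsWithin_iff.mp hne))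
  have hrU : closedBall z₀ r ⊆ U := fun z hz => (hrsub hz).1
  set C := F '' sphere z₀ r
  have hC : IsClosed C := ((isCompact_sphere z₀ r).image_of_continuousOn
    (hF.mono (sphere_subset_closedBall.trans hrU))).isClosed
  have hFz₀ : F z₀ ∉ C := by
    rintro ⟨z, hz, hFz⟩
    exact (hrsub (sphere_subset_closedBall hz)).2 (ne_of_mem_sphere hz hr.ne') hFz
  set ε := infDist (F z₀) C
  have hε : 0 < ε :=
    (hC.notMem_iff_infDist_pos ((NormedSpace.sphere_nonempty.mpr hr.le).image F)).mp hFz₀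
  have hsep : ∀ z ∈ sphere z₀ r, ε ≤ ‖F z - F z₀‖ := fun z hz =>
    (infDist_le_dist_of_mem (mem_image_of_mem F hz)).trans_eq (dist_eq_norm' _ _)
  have hclose : ∀ᶠ i in l, ∀ z ∈ closedBall z₀ r, dist (F z) (f i z) < ε / 6 :=
    tendstoUniformlyOn_iff.mp ((tendstoLocallyUniformlyOn_iff_forall_isCompact hU).mp hconv _
      hrU (isCompact_closedBall z₀ r)) _ (by positivity)
  refine ⟨ε / 6, by positivity, ?_⟩
  filter_upwards [hol, hclose] with i hfi hfiF
  have hdisc : DiffContOnCl ℂ (f i) (ball z₀ r) :=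
    (hfi.mono (closure_ball z₀ hr.ne' ▸ hrU)).diffContOnCl
  exact (hdisc.ball_subset_image_closedBall_of_dist_lt hr hε hsep hfiF).trans (image_mono hrU)

theorem stmt_1_general (U : Set ℂ) (hU : IsOpen U) (hUconn : IsConnected U)
    (f : ℕ → ℂ → ℂ) (F : ℂ → ℂ)
    (hol : ∀ n, DifferentiableOn ℂ (f n) U)
    (hconv : TendstoLocallyUniformlyOn f F Filter.atTop U)
    (hnc : ¬ ∃ c : ℂ, ∀ z ∈ U, F z = c) :
    ∀ K : Set ℂ, IsCompact K → K ⊆ F '' U →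
      ∃ N : ℕ, ∀ n ≥ N, K ⊆ (f n) '' U := by
  intro K hK hKF
  have hF : DifferentiableOn ℂ F U := hconv.differentiableOn (.of_forall hol) hU
  have hlocal : ∀ w ∈ K, ∃ V ∈ 𝓝 w, ∀ᶠ n in atTop, V ⊆ f n '' U := by
    intro w hw
    obtain ⟨z₀, hz₀, rfl⟩ := hKF hw
    obtain ⟨δ, hδ, hball⟩ := hconv.exists_ball_eventually_subset_image hU (.of_forall hol)
      hF.continuousOn hz₀
      ((hF.analyticOnNhd hU).eventually_ne_of_not_isConst hUconn.isPreconnected hnc hz₀)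
    exact ⟨ball (F z₀) δ, ball_mem_nhds _ hδ, hball⟩
  exact eventually_atTop.mp (hK.eventually_subset_of_forall_exists_mem_nhds hlocal)

/-- If holomorphic `f_n` converge locally uniformly on a nonempty open connected `U ⊆ ℂ`
to a nonconstant `f`, then every compact `K ⊆ f(U)` is eventually contained in `f_n(U)`. -/
theorem stmt_1 (U : Set ℂ) (hU : IsOpen U) (hUne : U.Nonempty) (hUconn : IsConnected U)
    (f : ℕ → ℂ → ℂ) (F : ℂ → ℂ)
    (hol : ∀ n, DifferentiableOn ℂ (f n) U)
    (hconv : TendstoLocallyUniformlyOn f F Filter.atTop U)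
    (hnc : ¬ ∃ c : ℂ, ∀ z ∈ U, F z = c) :
    ∀ K : Set ℂ, IsCompact K → K ⊆ F '' U →
      ∃ N : ℕ, ∀ n ≥ N, K ⊆ (f n) '' U :=
  stmt_1_general U hU hUconn f F hol hconv hnc
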